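/- Let λ = Uni(S²) ⊗ Leb ⊗ Uni(S²) on S² × [0,∞) × S². There exists a constant C > 0 such that for all s ≥ 0: λ({(u, h, v) : h ≥ max(10, s/3) and ‖u × v‖ ≤ 2/h}) ≤ C/(1+s). -/

import Mathlib

open MeasureTheory
open scoped ENNReal Pointwise

noncomputable abbrev E3 : Type := EuclideanSpace ℝ (Fin 3)

/-- The unit sphere `S²` in `ℝ³`. -/
abbrev S2 : Set E3 := Metric.sphere (0 : E3) 1

/-- The cross product on `ℝ³` realised as `EuclideanSpace ℝ (Fin 3)`. -/
noncomputable def cross (u v : E3) : E3 :=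
  WithLp.toLp 2 ![u 1 * v 2 - u 2 * v 1, u 2 * v 0 - u 0 * v 2, u 0 * v 1 - u 1 * v 0]

lemma norm_sq_E3 (w : E3) : ‖w‖^2 = w 0^2 + w 1^2 + w 2^2 := by
  rw [EuclideanSpace.norm_eq, Real.sq_sqrt (by positivity)]
  simp [Fin.sum_univ_three, Real.norm_eq_abs, sq_abs]

lemma inner_E3 (u x : E3) : (inner ℝ u x : ℝ) = u 0 * x 0 + u 1 * x 1 + u 2 * x 2 := by
  simp [PiLp.inner_apply, Fin.sum_univ_three, RCLike.inner_apply, conj_trivial]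
  ring

lemma crossEq (u v : E3) : cross u v 0 = u 1 * v 2 - u 2 * v 1
    ∧ cross u v 1 = u 2 * v 0 - u 0 * v 2 ∧ cross u v 2 = u 0 * v 1 - u 1 * v 0 :=
  ⟨rfl, rfl, rfl⟩

lemma lagrange (u x : E3) (hu : ‖u‖ = 1) :
    ‖cross u x‖^2 = ‖x‖^2 - (inner ℝ u x : ℝ)^2 := by
  have hu2 : u 0^2 + u 1^2 + u 2^2 = 1 := by rw [← norm_sq_E3, hu]; norm_num
  rw [norm_sq_E3, norm_sq_E3, inner_E3, (crossEq u x).1, (crossEq u x).2.1, (crossEq u x).2.2]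
  nlinarith [hu2]

lemma continuous_coord (i : Fin 3) : Continuous fun x : E3 => x i :=
  (continuous_apply i).comp (PiLp.continuous_ofLp 2 (fun _ : Fin 3 => ℝ))

lemma continuous_cross : Continuous (fun p : E3 × E3 => cross p.1 p.2) := by
  have hc : ∀ i : Fin 3, Continuous fun p : E3 × E3 => p.1 i :=
    fun i => (continuous_coord i).comp continuous_fst
  have hc2 : ∀ i : Fin 3, Continuous fun p : E3 × E3 => p.2 i :=
    fun i => (continuous_coord i).comp continuous_snd
  have : Continuous fun p : E3 × E3 => WithLp.toLp 2
      ![p.1 1 * p.2 2 - p.1 2 * p.2 1, p.1 2 * p.2 0 - p.1 0 * p.2 2,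
        p.1 0 * p.2 1 - p.1 1 * p.2 0] := by
    refine (PiLp.continuous_toLp 2 (fun _ : Fin 3 => ℝ)).comp ?_
    refine continuous_pi fun i => ?_
    fin_cases i <;>
      simp only [Matrix.cons_val_zero, Matrix.cons_val_one, Matrix.head_cons,
        Matrix.cons_val_two, Matrix.tail_cons] <;>
      exact ((hc _).mul (hc2 _)).sub ((hc _).mul (hc2 _))
  exact this

lemma norm_cross_smul_le (u : E3) (hu : ‖u‖ = 1) (r : ℝ) (x : E3) (hr : |r| ≤ 1)
    {ε : ℝ} (hε : 0 ≤ ε) (hx : ‖cross u x‖ ≤ ε) : ‖cross u (r • x)‖ ≤ ε := by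
  have h1 := lagrange u (r • x) hu
  have h2 := lagrange u x hu
  rw [norm_smul, real_inner_smul_right, Real.norm_eq_abs, mul_pow, sq_abs, mul_pow] at h1
  have key : ‖cross u x‖^2 ≤ ε^2 := by nlinarith [norm_nonneg (cross u x)]
  have hr2 : r^2 ≤ 1 := by nlinarith [sq_abs r, abs_nonneg r]
  have heq : ‖cross u (r • x)‖^2 = r^2 * ‖cross u x‖^2 := by rw [h1, h2]; ring
  have hle : r^2 * ‖cross u x‖^2 ≤ 1 * ε^2 :=
    mul_le_mul hr2 key (sq_nonneg _) one_pos.le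
  nlinarith [norm_nonneg (cross u (r • x))]

/-- The (unnormalised) surface measure on the unit sphere `S² ⊂ ℝ³`. -/
noncomputable def sphereVol : Measure ↥S2 := (volume : Measure E3).toSphere

/-- The uniform probability measure on the unit sphere `S² ⊂ ℝ³`. -/
noncomputable def uniSphere : Measure ↥S2 := (sphereVol Set.univ)⁻¹ • sphereVol

def box3 (a b c : ℝ) : Set E3 :=
  (MeasurableEquiv.toLp 2 (Fin 3 → ℝ)).symm ⁻¹' (Set.univ.pi fun i => Set.Icc (-(![a,b,c] i)) (![a,b,c] i))

lemma mem_box3 {a b c : ℝ} {z : E3} :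
    z ∈ box3 a b c ↔ |z 0| ≤ a ∧ |z 1| ≤ b ∧ |z 2| ≤ c := by
  simp only [box3, Set.mem_preimage, Set.mem_pi, Set.mem_univ, forall_true_left, Set.mem_Icc]
  constructor
  · intro h
    refine ⟨?_, ?_, ?_⟩ <;> rw [abs_le]
    · simpa using h 0
    · simpa using h 1
    · simpa using h 2
  · rintro ⟨h0, h1, h2⟩ i
    fin_cases i <;> simp <;> first
      | exact abs_le.mp h0 | exact abs_le.mp h1 | exact abs_le.mp h2

lemma measurableSet_box3 (a b c : ℝ) : MeasurableSet (box3 a b c) :=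
  (MeasurableEquiv.toLp 2 (Fin 3 → ℝ)).symm.measurable
    (MeasurableSet.univ_pi fun _ => measurableSet_Icc)

lemma volume_box3 {a b c : ℝ} (ha : 0 ≤ a) (hb : 0 ≤ b) (hc : 0 ≤ c) :
    volume (box3 a b c) = ENNReal.ofReal (8 * (a * b * c)) := by
  rw [box3, (EuclideanSpace.volume_preserving_symm_measurableEquiv_toLp (Fin 3)).measure_preimage
    ((MeasurableSet.univ_pi fun _ => measurableSet_Icc).nullMeasurableSet), volume_pi_pi]
  simp only [Real.volume_Icc, Fin.prod_univ_three]
  have e0 : (![a,b,c] 0 : ℝ) = a := rfl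
  have e1 : (![a,b,c] 1 : ℝ) = b := rfl
  have e2 : (![a,b,c] 2 : ℝ) = c := rfl
  rw [e0, e1, e2, sub_neg_eq_add, sub_neg_eq_add, sub_neg_eq_add,
    ← ENNReal.ofReal_mul (by linarith), ← ENNReal.ofReal_mul (by positivity)]
  congr 1
  ring

lemma finrank_E3 : Module.finrank ℝ E3 = 3 := finrank_euclideanSpace_fin

lemma sphereVol_univ_ge : (3:ℝ≥0∞) ≤ sphereVol Set.univ := by
  have hcube : box3 (1/2) (1/2) (1/2) ⊆ Metric.ball (0:E3) 1 := by
    intro x hx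
    rw [mem_box3] at hx
    obtain ⟨h0, h1, h2⟩ := hx
    rw [mem_ball_zero_iff]
    have hsq : ‖x‖^2 = x 0^2 + x 1^2 + x 2^2 := norm_sq_E3 x
    have b0 : x 0^2 ≤ (1/2)^2 := by rw [← sq_abs]; exact pow_le_pow_left₀ (abs_nonneg _) h0 2
    have b1 : x 1^2 ≤ (1/2)^2 := by rw [← sq_abs]; exact pow_le_pow_left₀ (abs_nonneg _) h1 2
    have b2 : x 2^2 ≤ (1/2)^2 := by rw [← sq_abs]; exact pow_le_pow_left₀ (abs_nonneg _) h2 2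
    nlinarith [norm_nonneg x]
  have hvol : (1:ℝ≥0∞) ≤ volume (Metric.ball (0:E3) 1) := by
    calc (1:ℝ≥0∞) = volume (box3 (1/2) (1/2) (1/2)) := by
          rw [volume_box3 (by norm_num) (by norm_num) (by norm_num)]; norm_num
      _ ≤ _ := measure_mono hcube
  rw [sphereVol, Measure.toSphere_apply_univ, finrank_E3]
  calc (3:ℝ≥0∞) = 3 * 1 := by norm_num
    _ ≤ 3 * volume (Metric.ball (0:E3) 1) := by
        exact mul_le_mul_right hvol 3
    _ = _ := by norm_num

instance : IsFiniteMeasure sphereVol := by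
  unfold sphereVol; infer_instance

lemma sphereVol_univ_ne_top : sphereVol Set.univ ≠ ⊤ := measure_ne_top _ _

instance : IsProbabilityMeasure uniSphere := by
  constructor
  rw [uniSphere, Measure.smul_apply, smul_eq_mul]
  exact ENNReal.inv_mul_cancel (fun h => by have h3 := sphereVol_univ_ge; rw [h] at h3; exact absurd h3 (by simp))
    sphereVol_univ_ne_top

lemma exists_onb (u : E3) (hu : ‖u‖ = 1) :
    ∃ b : OrthonormalBasis (Fin 3) ℝ E3, b 0 = u := by
  have hcard : Module.finrank ℝ E3 = Fintype.card (Fin 3) := by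
    rw [finrank_E3]; simp
  have horto : Orthonormal ℝ (({0} : Set (Fin 3)).restrict (fun _ : Fin 3 => u)) := by
    constructor
    · intro i; exact hu
    · intro i j hij
      exfalso
      apply hij
      ext
      have hi := i.2
      have hj := j.2
      simp only [Set.mem_singleton_iff] at hi hj
      rw [hi, hj]
  obtain ⟨b, hb⟩ := horto.exists_orthonormalBasis_extension_of_card_eq hcard
  exact ⟨b, hb 0 rfl⟩

lemma capBound (u : E3) (hu : ‖u‖ = 1) {ε : ℝ} (hε : 0 ≤ ε) :
    sphereVol {v : ↥S2 | ‖cross u ↑v‖ ≤ ε} ≤ ENNReal.ofReal (24 * ε^2) := by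
  set s : Set ↥S2 := {v : ↥S2 | ‖cross u ↑v‖ ≤ ε} with hs
  have hmeas : MeasurableSet s := by
    have hcont : Continuous fun v : ↥S2 => ‖cross u ↑v‖ :=
      (continuous_cross.comp (continuous_const.prodMk continuous_subtype_val)).norm
    exact measurableSet_le hcont.measurable measurable_const
  rw [sphereVol, Measure.toSphere_apply' _ hmeas, finrank_E3]
  obtain ⟨b, hb0⟩ := exists_onb u hu
  have hsub : Set.Ioo (0:ℝ) 1 • (Subtype.val '' s) ⊆ b.repr ⁻¹' (box3 1 ε ε) := by
    rintro x hx
    obtain ⟨r, hr, y, hy, rfl⟩ := hx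
    obtain ⟨v, hv, rfl⟩ := hy
    have hvn : ‖(v:E3)‖ = 1 := mem_sphere_zero_iff_norm.mp v.2
    have hr0 : (0:ℝ) < r := hr.1
    have hr1 : r < 1 := hr.2
    have hrabs : |r| ≤ 1 := by rw [abs_of_pos hr0]; linarith
    have hcx : ‖cross u (r • (v:E3))‖ ≤ ε := norm_cross_smul_le u hu r _ hrabs hε hv
    have hxnorm : ‖r • (v:E3)‖ ≤ 1 := by
      rw [norm_smul, hvn, Real.norm_eq_abs, mul_one]; exact hrabs
    set x := r • (v:E3) with hxdef
    set z := b.repr x with hz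
    rw [Set.mem_preimage, mem_box3]
    have hz0 : z 0 = (inner ℝ u x : ℝ) := by
      rw [hz, ← hb0, OrthonormalBasis.repr_apply_apply]
    have hznorm : ‖z‖ = ‖x‖ := b.repr.norm_map x
    have hzsq : z 0^2 + z 1^2 + z 2^2 = ‖x‖^2 := by
      rw [← norm_sq_E3, hznorm]
    have hlag := lagrange u x hu
    have h0 : |z 0| ≤ 1 := by
      rw [hz0]
      calc |(inner ℝ u x : ℝ)| ≤ ‖u‖ * ‖x‖ := abs_real_inner_le_norm u x
        _ ≤ 1 := by rw [hu, one_mul]; exact hxnorm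
    have htail : z 1^2 + z 2^2 ≤ ε^2 := by
      have : z 1^2 + z 2^2 = ‖cross u x‖^2 := by
        rw [hlag, ← hzsq, hz0]; ring
      rw [this]
      nlinarith [norm_nonneg (cross u x)]
    refine ⟨h0, ?_, ?_⟩ <;> nlinarith [abs_nonneg (z 1), abs_nonneg (z 2), sq_abs (z 1), sq_abs (z 2)]
  calc (3:ℝ≥0∞) * volume (Set.Ioo (0:ℝ) 1 • (Subtype.val '' s))
      ≤ 3 * volume (b.repr ⁻¹' (box3 1 ε ε)) := by
        exact mul_le_mul_right (measure_mono hsub) 3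
    _ = 3 * volume (box3 1 ε ε) := by
        rw [b.measurePreserving_repr.measure_preimage (measurableSet_box3 1 ε ε).nullMeasurableSet]
    _ = 3 * ENNReal.ofReal (8 * (1 * ε * ε)) := by
        rw [volume_box3 (by norm_num) hε hε]
    _ = ENNReal.ofReal (24 * ε^2) := by
        rw [show (3:ℝ≥0∞) = ENNReal.ofReal 3 from (ENNReal.ofReal_ofNat 3).symm,
          ← ENNReal.ofReal_mul (by norm_num)]
        congr 1
        ring

lemma uniCapBound (u : E3) (hu : ‖u‖ = 1) {ε : ℝ} (hε : 0 ≤ ε) :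
    uniSphere {v : ↥S2 | ‖cross u ↑v‖ ≤ ε} ≤ ENNReal.ofReal (8 * ε^2) := by
  rw [uniSphere, Measure.smul_apply, smul_eq_mul]
  have h3 : ENNReal.ofReal (24 * ε^2) = 3 * ENNReal.ofReal (8 * ε^2) := by
    rw [show (3:ℝ≥0∞) = ENNReal.ofReal 3 from (ENNReal.ofReal_ofNat 3).symm,
      ← ENNReal.ofReal_mul (by norm_num)]
    congr 1; ring
  calc (sphereVol Set.univ)⁻¹ * sphereVol {v : ↥S2 | ‖cross u ↑v‖ ≤ ε}
      ≤ (3:ℝ≥0∞)⁻¹ * ENNReal.ofReal (24 * ε^2) :=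
        mul_le_mul' (ENNReal.inv_le_inv' sphereVol_univ_ge) (capBound u hu hε)
    _ = (3:ℝ≥0∞)⁻¹ * (3 * ENNReal.ofReal (8 * ε^2)) := by rw [h3]
    _ = ENNReal.ofReal (8 * ε^2) := by
        rw [← mul_assoc, ENNReal.inv_mul_cancel (by norm_num) (by norm_num), one_mul]

lemma lintegral_tail {m : ℝ} (hm : 0 < m) :
    ∫⁻ h in Set.Ici m, ENNReal.ofReal (32 / h^2) = ENNReal.ofReal (32 / m) := by
  rw [show (volume.restrict (Set.Ici m)) = volume.restrict (Set.Ioi m) from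
    (Measure.restrict_congr_set MeasureTheory.Ioi_ae_eq_Ici).symm]
  have h1 : MeasureTheory.IntegrableOn (fun x : ℝ => 32 * x ^ (-2:ℝ)) (Set.Ioi m) :=
    (integrableOn_Ioi_rpow_of_lt (show (-2:ℝ) < -1 by norm_num) hm).const_mul 32
  have heq : ∀ x ∈ Set.Ioi m, 32 * x ^ (-2:ℝ) = 32 / x^2 := by
    intro x hx
    have hx0 : (0:ℝ) < x := hm.trans hx
    rw [Real.rpow_neg hx0.le, show ((2:ℝ)) = ((2:ℕ):ℝ) by norm_num, Real.rpow_natCast]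
    field_simp
  have hint : MeasureTheory.IntegrableOn (fun h : ℝ => 32 / h^2) (Set.Ioi m) :=
    h1.congr_fun heq measurableSet_Ioi
  have hnn : 0 ≤ᵐ[volume.restrict (Set.Ioi m)] fun h : ℝ => 32 / h^2 :=
    Filter.Eventually.of_forall fun h => div_nonneg (by norm_num) (sq_nonneg h)
  rw [← MeasureTheory.ofReal_integral_eq_lintegral_ofReal hint hnn]
  congr 1
  have hval : ∫ t in Set.Ioi m, t ^ (-2:ℝ) = m⁻¹ := by
    rw [integral_Ioi_rpow_of_lt (by norm_num) hm]
    norm_num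
    rw [Real.rpow_neg_one]
  calc ∫ h in Set.Ioi m, 32 / h^2
      = ∫ h in Set.Ioi m, 32 * h ^ (-2:ℝ) := by
        exact setIntegral_congr_fun measurableSet_Ioi fun x hx => (heq x hx).symm
    _ = 32 * ∫ h in Set.Ioi m, h ^ (-2:ℝ) := by rw [MeasureTheory.integral_const_mul]
    _ = 32 / m := by rw [hval]; field_simp

lemma sliceBound (m : ℝ) (hm : 10 ≤ m) (u : E3) (hu : ‖u‖ = 1) :
    ((volume.restrict (Set.Ici (0:ℝ))).prod uniSphere)
      {q : ℝ × ↥S2 | m ≤ q.1 ∧ ‖cross u ↑q.2‖ ≤ 2 / q.1} ≤ ENNReal.ofReal (32 / m) := by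
  have hm0 : (0:ℝ) < m := by linarith
  set B : Set (ℝ × ↥S2) := {q : ℝ × ↥S2 | m ≤ q.1 ∧ ‖cross u ↑q.2‖ ≤ 2 / q.1} with hB
  have hcont : Continuous fun q : ℝ × ↥S2 => ‖cross u ↑q.2‖ :=
    (continuous_cross.comp (continuous_const.prodMk
      (continuous_subtype_val.comp continuous_snd))).norm
  have hBmeas : MeasurableSet B :=
    (measurableSet_le measurable_const measurable_fst).inter
      (measurableSet_le hcont.measurable (measurable_const.div measurable_fst))
  rw [Measure.prod_apply hBmeas]
  have hpt : ∀ h : ℝ, uniSphere (Prod.mk h ⁻¹' B)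
      ≤ (Set.Ici m).indicator (fun h => ENNReal.ofReal (32 / h^2)) h := by
    intro h
    by_cases hh : m ≤ h
    · rw [Set.indicator_of_mem (Set.mem_Ici.mpr hh)]
      have hh0 : (0:ℝ) < h := lt_of_lt_of_le hm0 hh
      have hsub : Prod.mk h ⁻¹' B ⊆ {v : ↥S2 | ‖cross u ↑v‖ ≤ 2 / h} := fun v hv => hv.2
      refine le_trans (measure_mono hsub) (le_trans (uniCapBound u hu (by positivity)) ?_)
      apply ENNReal.ofReal_le_ofReal
      rw [show 8 * (2/h)^2 = 32 / h^2 by field_simp; ring]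
    · rw [Set.indicator_of_notMem (by simpa [Set.mem_Ici] using hh)]
      have : Prod.mk h ⁻¹' B = ∅ := by
        ext v; simp only [Set.mem_preimage, Set.mem_empty_iff_false, iff_false]
        intro hmem; exact hh hmem.1
      rw [this, measure_empty]
  calc ∫⁻ h, uniSphere (Prod.mk h ⁻¹' B) ∂(volume.restrict (Set.Ici 0))
      ≤ ∫⁻ h, (Set.Ici m).indicator (fun h => ENNReal.ofReal (32 / h^2)) h
          ∂(volume.restrict (Set.Ici 0)) := lintegral_mono hpt
    _ = ∫⁻ h in Set.Ici m, ENNReal.ofReal (32 / h^2) ∂(volume.restrict (Set.Ici 0)) := by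
        rw [lintegral_indicator measurableSet_Ici]
    _ = ∫⁻ h in Set.Ici m, ENNReal.ofReal (32 / h^2) := by
        rw [Measure.restrict_restrict measurableSet_Ici,
          Set.inter_eq_self_of_subset_left (Set.Ici_subset_Ici.mpr (by linarith))]
    _ = ENNReal.ofReal (32 / m) := lintegral_tail hm0

/-- The measure `λ = Uni(S²) ⊗ Leb ⊗ Uni(S²)` on `S² × [0,∞) × S²`. -/
noncomputable def lambdaMeasure : Measure (↥S2 × ℝ × ↥S2) :=
  uniSphere.prod ((volume.restrict (Set.Ici (0 : ℝ))).prod uniSphere)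

/-- There is a constant `C > 0` such that for all `s ≥ 0`,
`λ({(u,h,v) : h ≥ max(10, s/3), ‖u × v‖ ≤ 2/h}) ≤ C/(1+s)`. -/
theorem trapping_time_N3_measure_bound :
    ∃ C : ℝ, 0 < C ∧ ∀ s : ℝ, 0 ≤ s →
      lambdaMeasure {p : ↥S2 × ℝ × ↥S2 |
          max 10 (s / 3) ≤ p.2.1 ∧ ‖cross (p.1 : E3) (p.2.2 : E3)‖ ≤ 2 / p.2.1}
        ≤ ENNReal.ofReal (C / (1 + s)) := by
  refine ⟨128, by norm_num, fun s hs => ?_⟩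
  set m : ℝ := max 10 (s / 3) with hmdef
  have hm10 : (10:ℝ) ≤ m := le_max_left _ _
  have hm3 : s / 3 ≤ m := le_max_right _ _
  have hm0 : (0:ℝ) < m := by linarith
  set A : Set (↥S2 × ℝ × ↥S2) := {p : ↥S2 × ℝ × ↥S2 |
    m ≤ p.2.1 ∧ ‖cross (p.1 : E3) (p.2.2 : E3)‖ ≤ 2 / p.2.1} with hA
  have hcont : Continuous fun p : ↥S2 × ℝ × ↥S2 => ‖cross (p.1 : E3) (p.2.2 : E3)‖ :=
    (continuous_cross.comp ((continuous_subtype_val.comp continuous_fst).prodMk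
      (continuous_subtype_val.comp (continuous_snd.comp continuous_snd)))).norm
  have h21 : Measurable fun p : ↥S2 × ℝ × ↥S2 => p.2.1 :=
    measurable_fst.comp measurable_snd
  have hAmeas : MeasurableSet A :=
    (measurableSet_le measurable_const h21).inter
      (measurableSet_le hcont.measurable (measurable_const.div h21))
  rw [lambdaMeasure, Measure.prod_apply hAmeas]
  calc ∫⁻ u, ((volume.restrict (Set.Ici (0:ℝ))).prod uniSphere) (Prod.mk u ⁻¹' A) ∂uniSphere
      ≤ ∫⁻ _, ENNReal.ofReal (32 / m) ∂uniSphere := by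
        refine lintegral_mono fun u => ?_
        have hpre : Prod.mk u ⁻¹' A
            = {q : ℝ × ↥S2 | m ≤ q.1 ∧ ‖cross (u : E3) ↑q.2‖ ≤ 2 / q.1} := rfl
        rw [hpre]
        exact sliceBound m hm10 (u : E3) (mem_sphere_zero_iff_norm.mp u.2)
    _ = ENNReal.ofReal (32 / m) := by rw [lintegral_const, measure_univ, mul_one]
    _ ≤ ENNReal.ofReal (128 / (1 + s)) := by
        apply ENNReal.ofReal_le_ofReal
        rw [div_le_div_iff₀ hm0 (by linarith)]
        linarith
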